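/- arXiv:2506.10127 — 3 statements merged into one kernel-verified Lean document; each statement's English description precedes it below -/
import Mathlib

section
/- Suppose at time t₀ the estimate satisfies the triggering condition \hat{μ} > h·B where B = B(N_{t₀}) is the confidence radius, and before t₀ the condition failed; assume the good event |\hat{μ}(t) - μ| ≤ B(N_t) holds at all times and B(N_{t-1}) < 2·B(N_t). Then μ/(2(h+1)) < B(N_{t₀}) ≤ μ/(h-1), where h > 2. -/
theorem stmt_5 (μ h : ℝ) (hμ : μ ∈ Set.Ioc (0:ℝ) 1) (hh : 2 < h)
    (μhat B : ℕ → ℝ) (t₀ : ℕ) (ht₀ : 1 ≤ t₀)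
    (hgood : ∀ t, |μhat t - μ| ≤ B t)
    (hdouble : B (t₀ - 1) < 2 * B t₀)
    (htrig : μhat t₀ > h * B t₀)
    (hbefore : ∀ t < t₀, ¬ (μhat t > h * B t)) :
    μ / (2*(h+1)) < B t₀ ∧ B t₀ ≤ μ / (h-1) := by
  obtain ⟨hμ0, hμ1⟩ := hμ
  have h1 := abs_le.mp (hgood t₀)
  have h2 := abs_le.mp (hgood (t₀ - 1))
  have hb := hbefore (t₀ - 1) (by omega)
  push_neg at hb
  constructor
  · rw [div_lt_iff₀ (by linarith)]
    nlinarith [h2.1, h2.2]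
  · rw [le_div_iff₀ (by linarith)]
    nlinarith [h1.1, h1.2]
end

section
/- Regret of one Simple Round Robin cycle: with M players and K ≥ M arms with means μ_{σ₁} > … > μ_{σ_K}, capacities C_{σ_i}, and V the minimal number of top arms covering M players with optimal allocation counts C̃_{σ_i}, the quantity R = K·Σ_{i=1}^{V} μ_{σ_i}·C̃_{σ_i} − M·Σ_{j=1}^{K} μ_{σ_j} satisfies R ≤ M(K−V)(μ_{σ₁} − μ_{σ_K}). -/
/-!
Measure every arm by its gap `μ 0 - μ j` to the best arm. Since the weights sum to `M`, the
regret becomes `M · (sum of all gaps) - K · (weighted gaps of the top V arms)`. As every weight is at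
least 1 and `K ≥ M`, the weighted term absorbs the gaps of the top `V` arms, leaving `M` times the
gaps of the remaining `K - V` arms, each at most `μ 0 - μ (K-1)`.
-/

open Finset

lemma card_mul_sum_mul_sub_sum_mul_sum_eq {ι : Type*} (s t : Finset ι) (μ c : ι → ℝ) (m : ℝ) :
    (#t : ℝ) * ∑ i ∈ s, μ i * c i - (∑ i ∈ s, c i) * ∑ j ∈ t, μ j
      = (∑ i ∈ s, c i) * ∑ j ∈ t, (m - μ j) - #t * ∑ i ∈ s, (m - μ i) * c i := by
  simp only [sub_mul, sum_sub_distrib, ← mul_sum, sum_const, nsmul_eq_mul]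
  ring

lemma mul_sum_range_sub_mul_sum_range_mul_le {M K V : ℕ} {d c : ℕ → ℝ} {D : ℝ}
    (hMK : M ≤ K) (hVK : V ≤ K)
    (hd : ∀ i < V, 0 ≤ d i) (hdD : ∀ j, V ≤ j → j < K → d j ≤ D) (hc : ∀ i < V, 1 ≤ c i) :
    (M : ℝ) * ∑ j ∈ range K, d j - K * ∑ i ∈ range V, d i * c i ≤ M * (K - V) * D := by
  have hweighted : ∑ i ∈ range V, d i ≤ ∑ i ∈ range V, d i * c i :=
    sum_le_sum fun i hi => le_mul_of_one_le_right (hd i (mem_range.1 hi)) (hc i (mem_range.1 hi))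
  have habsorb : (M : ℝ) * ∑ i ∈ range V, d i ≤ K * ∑ i ∈ range V, d i * c i :=
    mul_le_mul (by exact_mod_cast hMK) hweighted
      (sum_nonneg fun i hi => hd i (mem_range.1 hi)) (Nat.cast_nonneg K)
  have htail : ∑ j ∈ Ico V K, d j ≤ (K - V) * D := by
    calc ∑ j ∈ Ico V K, d j ≤ #(Ico V K) • D :=
          sum_le_card_nsmul _ _ _ fun j hj => hdD j (mem_Ico.1 hj).1 (mem_Ico.1 hj).2
      _ = (K - V) * D := by rw [Nat.card_Ico, nsmul_eq_mul, Nat.cast_sub hVK]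
  have hsplit : ∑ j ∈ range K, d j = ∑ i ∈ range V, d i + ∑ j ∈ Ico V K, d j :=
    (sum_range_add_sum_Ico d hVK).symm
  rw [hsplit, mul_add, mul_assoc]
  linarith [mul_le_mul_of_nonneg_left htail (Nat.cast_nonneg (α := ℝ) M)]

theorem stmt_10_general (M K V : ℕ) (μ : ℕ → ℝ) (Ct : ℕ → ℕ)
    (hMK : M ≤ K) (hVK : V ≤ K)
    (hμmono : ∀ i j, i < j → j < K → μ j < μ i)
    (hCt : ∀ i ∈ Finset.range V, 1 ≤ Ct i)
    (hsum : ∑ i ∈ Finset.range V, Ct i = M) :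
    (K:ℝ) * ∑ i ∈ Finset.range V, μ i * (Ct i : ℝ)
      - (M:ℝ) * ∑ j ∈ Finset.range K, μ j
    ≤ (M:ℝ) * ((K:ℝ) - (V:ℝ)) * (μ 0 - μ (K-1)) := by
  have hanti : AntitoneOn μ (Set.Iio K) :=
    StrictAntiOn.antitoneOn fun i _ j hj hij => hμmono i j hij hj
  have hsumℝ : ∑ i ∈ range V, (Ct i : ℝ) = M := by exact_mod_cast hsum
  have hgap := card_mul_sum_mul_sub_sum_mul_sum_eq (range V) (range K) μ (fun i => (Ct i : ℝ)) (μ 0)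
  rw [card_range, hsumℝ] at hgap
  rw [hgap]
  refine mul_sum_range_sub_mul_sum_range_mul_le hMK hVK (fun i hi => ?_) (fun j _ hj => ?_)
    (fun i hi => by exact_mod_cast hCt i (mem_range.2 hi))
  · have hiK : i < K := hi.trans_le hVK
    exact sub_nonneg.2 (hanti (Nat.zero_lt_of_lt hiK) hiK (Nat.zero_le i))
  · exact sub_le_sub_left (hanti hj (Nat.sub_lt (Nat.zero_lt_of_lt hj) one_pos)
      (Nat.le_sub_one_of_lt hj)) _

theorem stmt_10 (M K V : ℕ) (μ : ℕ → ℝ) (Ct : ℕ → ℕ)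
    (hMK : M ≤ K) (hV1 : 1 ≤ V) (hVK : V ≤ K)
    (hμmono : ∀ i j, i < j → j < K → μ j < μ i)
    (hμmem : ∀ i < K, μ i ∈ Set.Icc (0:ℝ) 1)
    (hCt : ∀ i ∈ Finset.range V, 1 ≤ Ct i)
    (hsum : ∑ i ∈ Finset.range V, Ct i = M) :
    (K:ℝ) * ∑ i ∈ Finset.range V, μ i * (Ct i : ℝ)
      - (M:ℝ) * ∑ j ∈ Finset.range K, μ j
    ≤ (M:ℝ) * ((K:ℝ) - (V:ℝ)) * (μ 0 - μ (K-1)) :=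
  stmt_10_general M K V μ Ct hMK hVK hμmono hCt hsum
end

section
/- Regret of a complete Grouped Round Robin session: Σ_{ψ=1}^{M} 2[K·Σ_{i=1}^{V} μ_{σ_i}C̃_{σ_i} − Σ_{i=1}^{K} μ_{σ_i}(⌊M/ψ⌋·ψ·1{ψ ≤ C_{σ_i}} + (M mod ψ)·1{(M mod ψ) ≤ C_{σ_i}})] ≤ 2(MK − M + 1)·M·μ_{σ₁}. -/
theorem stmt_12 (M K V : ℕ) (μ : ℕ → ℝ) (C Ct : ℕ → ℕ)
    (hM : 1 ≤ M) (hK : 1 ≤ K) (hV1 : 1 ≤ V) (hVK : V ≤ K)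
    (hμmono : ∀ i j, i < j → j < K → μ j < μ i)
    (hμmem : ∀ i < K, μ i ∈ Set.Icc (0:ℝ) 1)
    (hCtC : ∀ i ∈ Finset.range V, Ct i ≤ C i)
    (hsum : ∑ i ∈ Finset.range V, Ct i = M) :
    ∑ ψ ∈ Finset.Icc 1 M, (2 * ((K:ℝ) * ∑ i ∈ Finset.range V, μ i * (Ct i:ℝ)
      - ∑ i ∈ Finset.range K, μ i *
          (((M/ψ * ψ : ℕ) : ℝ) * (if ψ ≤ C i then (1:ℝ) else 0)
            + ((M % ψ : ℕ) : ℝ) * (if M % ψ ≤ C i then (1:ℝ) else 0))))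
    ≤ 2 * ((M:ℝ)*(K:ℝ) - (M:ℝ) + 1) * (M:ℝ) * μ 0 := by
  set S := ∑ i ∈ Finset.range V, μ i * (Ct i:ℝ) with hSdef
  have hμ0 : (0:ℝ) ≤ μ 0 := (hμmem 0 hK).1
  have hμnn : ∀ i < K, 0 ≤ μ i := fun i hi => (hμmem i hi).1
  have hμle : ∀ i < K, μ i ≤ μ 0 := by
    intro i hi
    rcases Nat.eq_zero_or_pos i with h | h
    · simp [h]
    · exact le_of_lt (hμmono 0 i h hi)
  have hSle : S ≤ (M:ℝ) * μ 0 := by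
    calc S ≤ ∑ i ∈ Finset.range V, μ 0 * (Ct i : ℝ) := by
          apply Finset.sum_le_sum
          intro i hi
          exact mul_le_mul_of_nonneg_right
            (hμle i (lt_of_lt_of_le (Finset.mem_range.mp hi) hVK)) (Nat.cast_nonneg _)
      _ = μ 0 * (M:ℝ) := by rw [← Finset.mul_sum, ← Nat.cast_sum, hsum]
      _ = (M:ℝ) * μ 0 := mul_comm _ _
  have hSnn : 0 ≤ S := Finset.sum_nonneg fun i hi =>
    mul_nonneg (hμnn i (lt_of_lt_of_le (Finset.mem_range.mp hi) hVK)) (Nat.cast_nonneg _)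
  have hCtM : ∀ i ∈ Finset.range V, Ct i ≤ M := by
    intro i hi
    rw [← hsum]
    exact Finset.single_le_sum (fun j _ => Nat.zero_le _) hi
  -- key per-ψ lower bound on collected reward
  have key : ∀ ψ ∈ Finset.Icc 1 M,
      ∑ i ∈ Finset.range V, μ i * (M:ℝ) * (if ψ ≤ Ct i then (1:ℝ) else 0)
        ≤ ∑ i ∈ Finset.range K, μ i *
          (((M/ψ * ψ : ℕ) : ℝ) * (if ψ ≤ C i then (1:ℝ) else 0)
            + ((M % ψ : ℕ) : ℝ) * (if M % ψ ≤ C i then (1:ℝ) else 0)) := by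
    intro ψ hψ
    obtain ⟨hψ1, hψM⟩ := Finset.mem_Icc.mp hψ
    have hterm_nn : ∀ i < K, (0:ℝ) ≤ μ i *
        (((M/ψ * ψ : ℕ) : ℝ) * (if ψ ≤ C i then (1:ℝ) else 0)
          + ((M % ψ : ℕ) : ℝ) * (if M % ψ ≤ C i then (1:ℝ) else 0)) := by
      intro i hi
      apply mul_nonneg (hμnn i hi)
      apply add_nonneg <;> apply mul_nonneg (Nat.cast_nonneg _) <;> positivity
    calc ∑ i ∈ Finset.range V, μ i * (M:ℝ) * (if ψ ≤ Ct i then (1:ℝ) else 0)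
        ≤ ∑ i ∈ Finset.range V, μ i *
          (((M/ψ * ψ : ℕ) : ℝ) * (if ψ ≤ C i then (1:ℝ) else 0)
            + ((M % ψ : ℕ) : ℝ) * (if M % ψ ≤ C i then (1:ℝ) else 0)) := by
          apply Finset.sum_le_sum
          intro i hi
          have hiK : i < K := lt_of_lt_of_le (Finset.mem_range.mp hi) hVK
          by_cases h : ψ ≤ Ct i
          · have hC : ψ ≤ C i := le_trans h (hCtC i hi)
            have hmod : M % ψ ≤ C i := le_trans (le_of_lt (Nat.mod_lt M hψ1)) hC
            have hdmn : M/ψ * ψ + M % ψ = M := by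
              rw [Nat.mul_comm]; exact Nat.div_add_mod M ψ
            have hdm : ((M/ψ * ψ : ℕ) : ℝ) + ((M % ψ : ℕ) : ℝ) = (M:ℝ) := by
              exact_mod_cast congrArg (Nat.cast : ℕ → ℝ) hdmn
            simp only [if_pos h, if_pos hC, if_pos hmod, mul_one]
            exact le_of_eq (by rw [← hdm])
          · simp only [if_neg h, mul_zero]
            exact hterm_nn i hiK
      _ ≤ ∑ i ∈ Finset.range K, μ i *
          (((M/ψ * ψ : ℕ) : ℝ) * (if ψ ≤ C i then (1:ℝ) else 0)
            + ((M % ψ : ℕ) : ℝ) * (if M % ψ ≤ C i then (1:ℝ) else 0)) := by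
          apply Finset.sum_le_sum_of_subset_of_nonneg
          · exact Finset.range_subset_range.mpr hVK
          · intro i hi _
            exact hterm_nn i (Finset.mem_range.mp hi)
  -- sum of the lower bounds over ψ equals M * S
  have hswap : ∑ ψ ∈ Finset.Icc 1 M, ∑ i ∈ Finset.range V,
      μ i * (M:ℝ) * (if ψ ≤ Ct i then (1:ℝ) else 0) = (M:ℝ) * S := by
    rw [Finset.sum_comm]
    rw [hSdef, Finset.mul_sum]
    apply Finset.sum_congr rfl
    intro i hi
    rw [← Finset.mul_sum]
    have hfilter : Finset.filter (fun ψ => ψ ≤ Ct i) (Finset.Icc 1 M)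
        = Finset.Icc 1 (Ct i) := by
      have := hCtM i hi
      ext x
      simp only [Finset.mem_filter, Finset.mem_Icc]
      omega
    have : ∑ ψ ∈ Finset.Icc 1 M, (if ψ ≤ Ct i then (1:ℝ) else 0) = (Ct i : ℝ) := by
      rw [← Finset.sum_filter, hfilter]
      simp
    rw [this]; ring
  have hcardM : (Finset.Icc 1 M).card = M := by simp
  -- main chain
  have hmain : ∑ ψ ∈ Finset.Icc 1 M, (2 * ((K:ℝ) * S
      - ∑ i ∈ Finset.range K, μ i *
          (((M/ψ * ψ : ℕ) : ℝ) * (if ψ ≤ C i then (1:ℝ) else 0)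
            + ((M % ψ : ℕ) : ℝ) * (if M % ψ ≤ C i then (1:ℝ) else 0))))
      ≤ 2 * ((M:ℝ) * (K:ℝ) * S - (M:ℝ) * S) := by
    calc ∑ ψ ∈ Finset.Icc 1 M, (2 * ((K:ℝ) * S
          - ∑ i ∈ Finset.range K, μ i *
              (((M/ψ * ψ : ℕ) : ℝ) * (if ψ ≤ C i then (1:ℝ) else 0)
                + ((M % ψ : ℕ) : ℝ) * (if M % ψ ≤ C i then (1:ℝ) else 0))))
        ≤ ∑ ψ ∈ Finset.Icc 1 M, (2 * ((K:ℝ) * S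
          - ∑ i ∈ Finset.range V, μ i * (M:ℝ) * (if ψ ≤ Ct i then (1:ℝ) else 0))) := by
          apply Finset.sum_le_sum
          intro ψ hψ
          have := key ψ hψ
          linarith
      _ = 2 * ((M:ℝ) * (K:ℝ) * S - (M:ℝ) * S) := by
          rw [← Finset.mul_sum, Finset.sum_sub_distrib, Finset.sum_const, hcardM, hswap,
            nsmul_eq_mul]
          ring
  have hMK : (0:ℝ) ≤ (M:ℝ) * (K:ℝ) - (M:ℝ) := by
    have hK1 : (1:ℝ) ≤ (K:ℝ) := by exact_mod_cast hK
    have hM0 : (0:ℝ) ≤ (M:ℝ) := Nat.cast_nonneg _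
    nlinarith
  have hfin : 2 * ((M:ℝ) * (K:ℝ) * S - (M:ℝ) * S)
      ≤ 2 * ((M:ℝ)*(K:ℝ) - (M:ℝ) + 1) * (M:ℝ) * μ 0 := by
    have h1 : ((M:ℝ) * (K:ℝ) - (M:ℝ)) * S ≤ ((M:ℝ) * (K:ℝ) - (M:ℝ)) * ((M:ℝ) * μ 0) :=
      mul_le_mul_of_nonneg_left hSle hMK
    have h2 : (0:ℝ) ≤ (M:ℝ) * μ 0 := mul_nonneg (Nat.cast_nonneg _) hμ0
    nlinarith
  exact le_trans hmain hfin
end
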